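/- arXiv:1605.00130 — 2 statements merged into one kernel-verified Lean document; each statement's English description precedes it below -/
import Mathlib

section
/- Let ϱ, c₀ > 0. There exists ϱ' = ϱ'(ϱ, c₀) > 0 such that: if D₁, D₂ ⊂ ℝ^d are ϱ-John domains with min{|D₁|, |D₂|} ≤ c₀ |D₁ ∩ D₂| (where |·| denotes Lebesgue measure), then D₁ ∪ D₂ is a ϱ'-John domain. -/
open Set Metric MeasureTheory
open scoped ENNReal NNReal

noncomputable section

/-- The Euclidean plane. -/
abbrev Pt := EuclideanSpace ℝ (Fin 2)

/-- A bounded domain `Ω ⊆ ℝ^d` is a `ϱ`-John domain if there is a John center `p ∈ Ω`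
such that every `x ∈ Ω \ {p}` can be joined to `p` by a rectifiable curve,
parametrized by arc length, whose `ϱ`-carrot is contained in `Ω`. -/
def IsJohnDomain {d : ℕ} (ϱ : ℝ) (Ω : Set (EuclideanSpace ℝ (Fin d))) : Prop :=
  IsOpen Ω ∧ IsConnected Ω ∧ Bornology.IsBounded Ω ∧
  ∃ p ∈ Ω, ∀ x ∈ Ω \ {p}, ∃ L : ℝ, 0 ≤ L ∧
    ∃ γ : ℝ → EuclideanSpace ℝ (Fin d),
      γ 0 = x ∧ γ L = p ∧ MapsTo γ (Icc 0 L) Ω ∧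
      (∀ t ∈ Icc (0:ℝ) L, eVariationOn γ (Icc 0 t) = ENNReal.ofReal t) ∧
      (∀ t ∈ Icc (0:ℝ) L, ball (γ t) (ϱ * t) ⊆ Ω)

/-- A (simple) polygon, encoded by its cyclically ordered list of vertices:
consecutive vertices span the edges, non-adjacent edges are disjoint, adjacent edges
meet exactly in the common vertex, and each vertex is a genuine corner. -/
structure PlanePolygon where
  n : ℕ
  three_le : 3 ≤ n
  vertex : ZMod n → Pt
  inj : Function.Injective vertex
  edges_meet : ∀ i j : ZMod n, j ≠ i → j ≠ i + 1 → j + 1 ≠ i →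
    segment ℝ (vertex i) (vertex (i + 1)) ∩ segment ℝ (vertex j) (vertex (j + 1)) = ∅
  adj_meet : ∀ i : ZMod n,
    segment ℝ (vertex i) (vertex (i + 1)) ∩ segment ℝ (vertex (i + 1)) (vertex (i + 2))
      = {vertex (i + 1)}
  corner : ∀ i : ZMod n, ¬ Collinear ℝ ({vertex i, vertex (i + 1), vertex (i + 2)} : Set Pt)

namespace PlanePolygon

/-- The boundary polygonal curve of a polygon. -/
def boundary (P : PlanePolygon) : Set Pt :=
  ⋃ i : ZMod P.n, segment ℝ (P.vertex i) (P.vertex (i + 1))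

/-- The (closed) region enclosed by the boundary curve: all points whose connected
component in the complement of the boundary is bounded (boundary points included,
since their component is empty). -/
def carrier (P : PlanePolygon) : Set Pt :=
  {x : Pt | Bornology.IsBounded (connectedComponentIn P.boundaryᶜ x)}

/-- The set of vertices `𝒱_P`. -/
def vertices (P : PlanePolygon) : Set Pt := Set.range P.vertex

open Classical in
/-- The interior angle at the `i`-th vertex; it is the unoriented angle of the two adjacent
edges whenever the corresponding angular bisector points into the polygon, and `2π` minus
this angle otherwise. -/
def interiorAngle (P : PlanePolygon) (i : ZMod P.n) : ℝ :=
  if (∃ ε > (0:ℝ), ∀ t ∈ Ioo (0:ℝ) ε,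
        P.vertex i + t • (midpoint ℝ (P.vertex (i - 1)) (P.vertex (i + 1)) - P.vertex i)
          ∈ interior P.carrier)
  then EuclideanGeometry.angle (P.vertex (i - 1)) (P.vertex i) (P.vertex (i + 1))
  else 2 * Real.pi - EuclideanGeometry.angle (P.vertex (i - 1)) (P.vertex i) (P.vertex (i + 1))

/-- The set `𝒱'_P` of concave vertices, i.e. those with interior angle `> π`. -/
def concaveVertices (P : PlanePolygon) : Set Pt :=
  {x : Pt | ∃ i : ZMod P.n, P.vertex i = x ∧ Real.pi < P.interiorAngle i}

open Classical in
/-- The interior angle `∢(x, P)` at a point `x` (junk value `0` if `x` is not a vertex). -/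
def angleAt (P : PlanePolygon) (x : Pt) : ℝ :=
  if h : ∃ i : ZMod P.n, P.vertex i = x then P.interiorAngle h.choose else 0

end PlanePolygon

/-- The intrinsic (geodesic) distance of `p, q` inside `S`: the infimal length of a
Lipschitz curve in `S` joining `p` and `q`. -/
def intrinsicDist (S : Set Pt) (p q : Pt) : ℝ :=
  sInf {L : ℝ | ∃ γ : ℝ → Pt, γ 0 = p ∧ γ 1 = q ∧ MapsTo γ (Icc (0:ℝ) 1) S ∧
    (∃ K : ℝ≥0, LipschitzOnWith K γ (Icc (0:ℝ) 1)) ∧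
    eVariationOn γ (Icc (0:ℝ) 1) = ENNReal.ofReal L}

/-- The intrinsic diameter `d(S)`. -/
def intrinsicDiam (S : Set Pt) : ℝ :=
  sSup {r : ℝ | ∃ p ∈ S, ∃ q ∈ S, intrinsicDist S p q = r}

/-- The segment `[p;q]` induces the partition `P = Q₁ ∪ Q₂` with `Q₁ ∩ Q₂ = [p;q]`. -/
def InducesPartition (P : PlanePolygon) (p q : Pt) (Q₁ Q₂ : PlanePolygon) : Prop :=
  p ≠ q ∧ p ∈ frontier P.carrier ∧ q ∈ frontier P.carrier ∧
  segment ℝ p q ⊆ P.carrier ∧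
  Q₁.carrier ∪ Q₂.carrier = P.carrier ∧
  Q₁.carrier ∩ Q₂.carrier = segment ℝ p q

/-- `ϑ`-semiconvexity of a polygon. -/
def Semiconvex (ϑ : ℝ) (P : PlanePolygon) : Prop :=
  ∀ v ∈ P.concaveVertices, ∀ w ∈ frontier P.carrier, ∀ Q₁ Q₂ : PlanePolygon,
    InducesPartition P v w Q₁ Q₂ →
    ϑ * min (intrinsicDiam Q₁.carrier) (intrinsicDiam Q₂.carrier) ≤ dist v w

/-- `ω`-rotundity of a polygon: it contains a ball of radius `≥ ω d(P)`. -/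
def Rotund (ω : ℝ) (P : PlanePolygon) : Prop :=
  ∃ x ∈ P.carrier, ∃ r : ℝ, ω * intrinsicDiam P.carrier ≤ r ∧ ball x r ⊆ P.carrier

/-- The `η`-cigar around the segment `[v;w]`. -/
def cigar (v w : Pt) (η : ℝ) : Set Pt :=
  ⋃ s ∈ Icc (0:ℝ) 1, ball (v + s • (w - v)) (η * dist v w * min s (1 - s))

/-- The visible region `cig_P([v;w], η)`. -/
def visCigar (P : PlanePolygon) (v w : Pt) (η : ℝ) : Set Pt :=
  {x ∈ closure (cigar v w η) | ∃ p ∈ segment ℝ v w, segment ℝ p x ⊆ P.carrier}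

/-- The segmentation property (SP) for the segment `[v;w]` inducing `P = Q₁ ∪ Q₂`. -/
def SatisfiesSP (P : PlanePolygon) (η : ℝ) (v w : Pt) (Q₁ Q₂ : PlanePolygon) : Prop :=
  P.concaveVertices ∩ visCigar P v w η ⊆ {v, w} ∧
  (Q₁.n = 3 → (1/2) * Real.arcsin η < Q₁.angleAt v) ∧
  (Q₂.n = 3 → (1/2) * Real.arcsin η < Q₂.angleAt v)

/-- `(SP)`-`ϑ`-semiconvexity (with respect to the parameter `η`). -/
def SPSemiconvex (ϑ η : ℝ) (P : PlanePolygon) : Prop :=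
  ∀ v ∈ P.concaveVertices, ∀ w ∈ frontier P.carrier, ∀ Q₁ Q₂ : PlanePolygon,
    InducesPartition P v w Q₁ Q₂ → SatisfiesSP P η v w Q₁ Q₂ →
    ϑ * min (intrinsicDiam Q₁.carrier) (intrinsicDiam Q₂.carrier) ≤ dist v w

/-- `N'(Q)`: the number of concave vertices of `P` other than `v, w` lying on `∂Q`. -/
def Nprime (P Q : PlanePolygon) (v w : Pt) : ℕ :=
  ((P.concaveVertices \ {v, w}) ∩ frontier Q.carrier).ncard

open Classical in
/-- The auxiliary set `Q_{v,w}` attached to a partition `P = Q₁ ∪ Q₂`. -/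
def Qvw (P : PlanePolygon) (v w : Pt) (Q₁ Q₂ : PlanePolygon) : Set Pt :=
  if Nprime P Q₁ v w < Nprime P Q₂ v w ∨
      (Nprime P Q₁ v w = Nprime P Q₂ v w ∧ volume Q₁.carrier < volume Q₂.carrier) then
    Q₁.carrier
  else if Nprime P Q₁ v w = Nprime P Q₂ v w ∧ volume Q₁.carrier = volume Q₂.carrier then
    Q₁.carrier ∪ Q₂.carrier
  else Q₂.carrier

/-- The weak segmentation property (WSP). -/
def SatisfiesWSP (P : PlanePolygon) (η : ℝ) (v w : Pt) (Q₁ Q₂ : PlanePolygon) : Prop :=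
  P.concaveVertices ∩ visCigar P v w η ∩ Qvw P v w Q₁ Q₂ ⊆ {v, w} ∧
  (Q₁.n = 3 → (1/2) * Real.arcsin η < Q₁.angleAt v) ∧
  (Q₂.n = 3 → (1/2) * Real.arcsin η < Q₂.angleAt v)

/-- The width `|A|_{Π,R}` of `A` in the direction `R e₁ = (cos θ, sin θ)`, `R ∈ SO(2)`
being parametrized by the rotation angle `θ`. -/
def dirWidth (A : Set Pt) (θ : ℝ) : ℝ :=
  sSup {r : ℝ | ∃ x ∈ A, ∃ y ∈ A,
    |(x 0 - y 0) * Real.cos θ + (x 1 - y 1) * Real.sin θ| = r}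

/-- `min_{R ∈ SO(2)} |A|_{Π,R}`. -/
def minWidth (A : Set Pt) : ℝ := ⨅ θ : ℝ, dirWidth A θ

/-- `max_{R ∈ SO(2)} |A|_{Π,R}`. -/
def maxWidth (A : Set Pt) : ℝ := ⨆ θ : ℝ, dirWidth A θ

/-- Coordinates of `y` in the frame centered at `x` rotated by the angle `θ`. -/
def localCoords (x y : Pt) (θ : ℝ) : ℝ × ℝ :=
  ((y 0 - x 0) * Real.cos θ + (y 1 - x 1) * Real.sin θ,
    -((y 0 - x 0) * Real.sin θ) + (y 1 - x 1) * Real.cos θ)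

/-- `Ω ⊆ ℝ²` has Lipschitz boundary: near every boundary point, after a rotation, `Ω`
is the region above the graph of a Lipschitz function. -/
def HasLipschitzBoundary (Ω : Set Pt) : Prop :=
  ∀ x ∈ frontier Ω, ∃ r > (0:ℝ), ∃ θ : ℝ, ∃ f : ℝ → ℝ,
    (∃ K : ℝ≥0, LipschitzWith K f) ∧
    Ω ∩ ball x r = {y ∈ ball x r | f (localCoords x y θ).1 < (localCoords x y θ).2}

/-- `Ω ⊆ ℝ²` has `C¹` boundary: near every boundary point, after a rotation, `Ω`
is the region above the graph of a `C¹` function. -/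
def HasC1Boundary (Ω : Set Pt) : Prop :=
  ∀ x ∈ frontier Ω, ∃ r > (0:ℝ), ∃ θ : ℝ, ∃ f : ℝ → ℝ,
    ContDiff ℝ 1 f ∧
    Ω ∩ ball x r = {y ∈ ball x r | f (localCoords x y θ).1 < (localCoords x y θ).2}

/-- The saturation `sat(D)`: the interior of the complement of the unbounded connected
component of `ℝ² \ D`. -/
def saturate (D : Set Pt) : Set Pt :=
  interior {x : Pt | x ∈ D ∨ Bornology.IsBounded (connectedComponentIn Dᶜ x)}

/-- The carrier of an optional polygon (`∅` for `none`). -/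
def optPolyCarrier : Option PlanePolygon → Set Pt
  | none => ∅
  | some Q => Q.carrier

/-- The concave vertices of an optional polygon (`∅` for `none`). -/
def optPolyConcave : Option PlanePolygon → Set Pt
  | none => ∅
  | some Q => Q.concaveVertices

end

/-!
Pick `z ∈ D₁ ∩ D₂` deep inside `D₁`, i.e. with `B(z, c · diam D₁) ⊆ D₁`. A point
`x ∈ D₁ \ D₂` is joined to the John center `p₂` of `D₂` by following its John curve to the
center `p₁` of `D₁`, the John curve of `z` in `D₁` backwards to `z`, and the John curve of `z`
in `D₂` on to `p₂`. Since the first two pieces together have length `≤ diam D₁ / ϱ`, a carrot of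
aperture `ϱ' ≪ c ϱ²` stays inside the ball around `z` while the last two curves are close to `z`,
and inside their own carrots afterwards.

Such a point `z` exists because the boundary layer `{x ∈ Ω | dist(x, ∂Ω) ≤ δ}` of a John domain
has measure at most a fixed fraction `θ < 1` of the layer of width `3δ`: every point of the thin
layer lies within `2δ/ϱ` of a point at distance exactly `2δ` from the boundary (on its John
curve), and a Vitali covering by balls around such points compares the two measures. Iterating,
the layer of width `dist(p₁, ∂D₁) / 3ᵏ` has measure `≤ θᵏ |D₁| < |D₁ ∩ D₂|` for large `k`.
-/

section ArcLength

variable {α : Type*}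

def IsArcLength [PseudoEMetricSpace α] (γ : ℝ → α) (L : ℝ) : Prop :=
  ∀ t ∈ Icc (0 : ℝ) L, eVariationOn γ (Icc 0 t) = ENNReal.ofReal t

noncomputable def pathConcat (γ σ : ℝ → α) (L t : ℝ) : α := if t ≤ L then γ t else σ (t - L)

theorem pathConcat_of_le {γ σ : ℝ → α} {L t : ℝ} (ht : t ≤ L) : pathConcat γ σ L t = γ t :=
  if_pos ht

theorem pathConcat_add {γ σ : ℝ → α} {L u : ℝ} (hγσ : γ L = σ 0) (hu : 0 ≤ u) :
    pathConcat γ σ L (L + u) = σ u := by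
  rcases hu.eq_or_lt with rfl | hu
  · simp [pathConcat, hγσ]
  · simp [pathConcat, hu]

theorem forall_mem_Icc_pathConcat {P : ℝ → α → Prop} {γ τ : ℝ → α} {L M : ℝ} (hγτ : γ L = τ 0)
    (hγ : ∀ t ∈ Icc 0 L, P t (γ t)) (hτ : ∀ s ∈ Icc 0 M, P (L + s) (τ s)) :
    ∀ t ∈ Icc 0 (L + M), P t (pathConcat γ τ L t) := by
  intro t ht
  rcases le_total t L with htL | hLt
  · rw [pathConcat_of_le htL]
    exact hγ t ⟨ht.1, htL⟩
  · have hs : t - L ∈ Icc 0 M := ⟨sub_nonneg.2 hLt, by linarith [ht.2]⟩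
    have hconcat := pathConcat_add hγτ hs.1
    rw [add_sub_cancel] at hconcat
    simpa [hconcat] using hτ (t - L) hs

namespace IsArcLength

section PseudoEMetric

variable [PseudoEMetricSpace α] {γ σ : ℝ → α} {L M : ℝ}

theorem eVariationOn_Icc (h : IsArcLength γ L) {s t : ℝ} (hs : 0 ≤ s) (hst : s ≤ t)
    (ht : t ≤ L) : eVariationOn γ (Icc s t) = ENNReal.ofReal (t - s) := by
  have hsplit := eVariationOn.Icc_add_Icc γ (s := univ) hs hst (mem_univ _)
  simp only [univ_inter, h s ⟨hs, hst.trans ht⟩, h t ⟨hs.trans hst, ht⟩] at hsplit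
  rw [← ENNReal.add_right_inj ENNReal.ofReal_ne_top, hsplit,
    ← ENNReal.ofReal_add hs (sub_nonneg.2 hst), add_sub_cancel]

theorem edist_le (h : IsArcLength γ L) {s t : ℝ} (hs : 0 ≤ s) (hst : s ≤ t) (ht : t ≤ L) :
    edist (γ s) (γ t) ≤ ENNReal.ofReal (t - s) :=
  h.eVariationOn_Icc hs hst ht ▸
    eVariationOn.edist_le γ ⟨le_rfl, hst⟩ ⟨hst, le_rfl⟩

theorem reverse (h : IsArcLength γ L) : IsArcLength (fun u ↦ γ (L - u)) L := by
  intro t ht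
  rw [show (fun u ↦ γ (L - u)) = γ ∘ (L - ·) from rfl,
    eVariationOn.comp_eq_of_antitoneOn γ _ fun x _ y _ hxy ↦ sub_le_sub_left hxy L,
    image_const_sub_Icc, sub_zero, h.eVariationOn_Icc (by linarith [ht.2]) (by linarith [ht.1])
      le_rfl, sub_sub_cancel]

theorem pathConcat (hγ : IsArcLength γ L) (hσ : IsArcLength σ M) (hL : 0 ≤ L)
    (hγσ : γ L = σ 0) : IsArcLength (pathConcat γ σ L) (L + M) := by
  intro t ht
  rcases le_total t L with htL | hLt
  · rw [eVariationOn.eq_of_eqOn fun s hs ↦ pathConcat_of_le (hs.2.trans htL)]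
    exact hγ t ⟨ht.1, htL⟩
  have hsplit := eVariationOn.Icc_add_Icc (_root_.pathConcat γ σ L) (s := univ) hL hLt
    (mem_univ _)
  simp only [univ_inter] at hsplit
  have hfirst : eVariationOn (_root_.pathConcat γ σ L) (Icc 0 L) = ENNReal.ofReal L := by
    rw [eVariationOn.eq_of_eqOn fun s hs ↦ pathConcat_of_le hs.2]
    exact hγ L ⟨hL, le_rfl⟩
  have hsecond : eVariationOn (_root_.pathConcat γ σ L) (Icc L t) = ENNReal.ofReal (t - L) := by
    have heq : EqOn (_root_.pathConcat γ σ L) (σ ∘ (· - L)) (Icc L t) := fun s hs ↦ by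
      simpa using pathConcat_add (σ := σ) hγσ (sub_nonneg.2 hs.1)
    rw [eVariationOn.eq_of_eqOn heq,
      eVariationOn.comp_eq_of_monotoneOn σ _ fun x _ y _ hxy ↦ sub_le_sub_right hxy L,
      image_sub_const_Icc, sub_self]
    exact hσ (t - L) ⟨sub_nonneg.2 hLt, by linarith [ht.2]⟩
  rw [← hsplit, hfirst, hsecond, ← ENNReal.ofReal_add hL (sub_nonneg.2 hLt), add_sub_cancel]

end PseudoEMetric

variable [PseudoMetricSpace α] {γ : ℝ → α} {L : ℝ}

theorem dist_le (h : IsArcLength γ L) {s t : ℝ} (hs : 0 ≤ s) (hst : s ≤ t) (ht : t ≤ L) :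
    dist (γ s) (γ t) ≤ t - s := by
  rw [← ENNReal.ofReal_le_ofReal_iff (sub_nonneg.2 hst), ← edist_dist]
  exact h.edist_le hs hst ht

theorem dist_le_self (h : IsArcLength γ L) {t : ℝ} (ht : t ∈ Icc 0 L) : dist (γ t) (γ 0) ≤ t := by
  simpa [dist_comm] using h.dist_le le_rfl ht.1 ht.2

theorem lipschitzOnWith (h : IsArcLength γ L) : LipschitzOnWith 1 γ (Icc 0 L) := by
  refine LipschitzOnWith.of_dist_le_mul fun s hs t ht ↦ ?_
  rw [NNReal.coe_one, one_mul, Real.dist_eq]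
  rcases le_total s t with hst | hts
  · rw [abs_sub_comm]; exact (h.dist_le hs.1 hst ht.2).trans (le_abs_self _)
  · rw [dist_comm]; exact (h.dist_le ht.1 hts hs.2).trans (le_abs_self _)

end IsArcLength

end ArcLength

section JohnCurve

variable {α : Type*} [PseudoMetricSpace α] {ϱ ϱ' L M : ℝ} {Ω Ω' : Set α} {γ τ : ℝ → α}
  {p x : α}

theorem le_infDist_compl_of_ball_subset {r : ℝ} (hne : Ωᶜ.Nonempty) (h : ball x r ⊆ Ω) :
    r ≤ infDist x Ωᶜ :=
  (le_infDist hne).2 fun _ hy ↦ le_of_not_gt fun hlt ↦ hy (h (mem_ball'.2 hlt))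

structure IsJohnCurve (ϱ : ℝ) (Ω : Set α) (γ : ℝ → α) (L : ℝ) : Prop where
  nonneg : 0 ≤ L
  mapsTo : MapsTo γ (Icc 0 L) Ω
  isArcLength : IsArcLength γ L
  ball_subset : ∀ t ∈ Icc 0 L, ball (γ t) (ϱ * t) ⊆ Ω

namespace IsJohnCurve

theorem const (hx : x ∈ Ω) : IsJohnCurve ϱ Ω (fun _ ↦ x) 0 where
  nonneg := le_rfl
  mapsTo _ _ := hx
  isArcLength t ht := by
    rw [eVariationOn.constant_on (subsingleton_singleton.anti (by rintro _ ⟨_, _, rfl⟩; rfl)),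
      le_antisymm ht.2 ht.1, ENNReal.ofReal_zero]
  ball_subset t ht := by simp [le_antisymm ht.2 ht.1]

theorem mono (h : IsJohnCurve ϱ Ω γ L) (hϱ : ϱ' ≤ ϱ) (hΩ : Ω ⊆ Ω') :
    IsJohnCurve ϱ' Ω' γ L where
  nonneg := h.nonneg
  mapsTo := h.mapsTo.mono_right hΩ
  isArcLength := h.isArcLength
  ball_subset t ht :=
    (ball_subset_ball (mul_le_mul_of_nonneg_right hϱ ht.1)).trans ((h.ball_subset t ht).trans hΩ)

theorem ball_end_subset (h : IsJohnCurve ϱ Ω γ L) : ball (γ L) (ϱ * L) ⊆ Ω :=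
  h.ball_subset L ⟨h.nonneg, le_rfl⟩

theorem append (hγ : IsJohnCurve ϱ Ω γ L) (hτ : IsArcLength τ M) (hM : 0 ≤ M)
    (hτΩ : MapsTo τ (Icc 0 M) Ω) (hτball : ∀ s ∈ Icc 0 M, ball (τ s) (ϱ * (L + s)) ⊆ Ω)
    (hγτ : γ L = τ 0) : IsJohnCurve ϱ Ω (pathConcat γ τ L) (L + M) where
  nonneg := add_nonneg hγ.nonneg hM
  mapsTo := forall_mem_Icc_pathConcat hγτ hγ.mapsTo hτΩ
  isArcLength := hγ.isArcLength.pathConcat hτ hγ.nonneg hγτ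
  ball_subset := forall_mem_Icc_pathConcat (P := fun t y ↦ ball y (ϱ * t) ⊆ Ω) hγτ
    hγ.ball_subset hτball

theorem exists_infDist_eq (h : IsJohnCurve ϱ Ω γ L) (hne : Ωᶜ.Nonempty) {s : ℝ}
    (h₀ : infDist (γ 0) Ωᶜ ≤ s) (hL : s ≤ infDist (γ L) Ωᶜ) :
    ∃ t ∈ Icc 0 L, infDist (γ t) Ωᶜ = s ∧ ϱ * t ≤ s := by
  obtain ⟨t, ht, hts⟩ := intermediate_value_Icc h.nonneg
    ((continuous_infDist_pt _).comp_continuousOn h.isArcLength.lipschitzOnWith.continuousOn)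
    ⟨h₀, hL⟩
  exact ⟨t, ht, hts, hts ▸ le_infDist_compl_of_ball_subset hne (h.ball_subset t ht)⟩

end IsJohnCurve

def IsJohnCenter (ϱ : ℝ) (Ω : Set α) (p : α) : Prop :=
  ∀ x ∈ Ω, ∃ γ : ℝ → α, ∃ L, γ 0 = x ∧ γ L = p ∧ IsJohnCurve ϱ Ω γ L

namespace IsJohnCenter

theorem mono (h : IsJohnCenter ϱ Ω p) (hϱ : ϱ' ≤ ϱ) : IsJohnCenter ϱ' Ω p := fun x hx ↦
  let ⟨γ, L, hγ₀, hγL, hγ⟩ := h x hx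
  ⟨γ, L, hγ₀, hγL, hγ.mono hϱ le_rfl⟩

theorem ball_subset (h : IsJohnCenter ϱ Ω p) (hϱ : 0 ≤ ϱ) (hx : x ∈ Ω) :
    ball p (ϱ * dist x p) ⊆ Ω := by
  obtain ⟨γ, L, rfl, rfl, hγ⟩ := h x hx
  have hdist := hγ.isArcLength.dist_le_self ⟨hγ.nonneg, le_rfl⟩
  rw [dist_comm] at hdist
  exact (ball_subset_ball (mul_le_mul_of_nonneg_left hdist hϱ)).trans hγ.ball_end_subset

theorem mul_diam_le (h : IsJohnCenter ϱ Ω p) (hϱ : 0 < ϱ) (hne : Ωᶜ.Nonempty) :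
    ϱ * diam Ω ≤ 2 * infDist p Ωᶜ := by
  have hdeep : ∀ x ∈ Ω, ϱ * dist x p ≤ infDist p Ωᶜ := fun x hx ↦
    le_infDist_compl_of_ball_subset hne (h.ball_subset hϱ.le hx)
  rw [← le_div_iff₀' hϱ]
  refine diam_le_of_forall_dist_le (div_nonneg (mul_nonneg zero_le_two infDist_nonneg) hϱ.le)
    fun x hx y hy ↦ ?_
  rw [le_div_iff₀' hϱ]
  calc ϱ * dist x y ≤ ϱ * dist x p + ϱ * dist y p := by
        rw [← mul_add]; exact mul_le_mul_of_nonneg_left (dist_triangle_right x y p) hϱ.le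
    _ ≤ 2 * infDist p Ωᶜ := by linarith [hdeep x hx, hdeep y hy]

theorem exists_dist_le_of_infDist_le (h : IsJohnCenter ϱ Ω p) (hϱ : 0 < ϱ) (hne : Ωᶜ.Nonempty)
    (hx : x ∈ Ω) {s : ℝ} (hxs : infDist x Ωᶜ ≤ s) (hsp : s ≤ infDist p Ωᶜ) :
    ∃ y, dist x y ≤ s / ϱ ∧ infDist y Ωᶜ = s := by
  obtain ⟨γ, L, rfl, rfl, hγ⟩ := h x hx
  obtain ⟨t, ht, hts, hϱt⟩ := hγ.exists_infDist_eq hne hxs hsp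
  refine ⟨γ t, ?_, hts⟩
  rw [dist_comm, le_div_iff₀' hϱ]
  exact (mul_le_mul_of_nonneg_left (hγ.isArcLength.dist_le_self ht) hϱ.le).trans hϱt

end IsJohnCenter

end JohnCurve

section Union

variable {α : Type*} [PseudoMetricSpace α] {ϱ c Δ u : ℝ} {U : Set α} {w z : α}

noncomputable def unionJohnConst (ϱ c : ℝ) : ℝ := c * ϱ ^ 2 / (2 + c * ϱ)

theorem unionJohnConst_pos (hϱ : 0 < ϱ) (hc : 0 < c) : 0 < unionJohnConst ϱ c := by
  unfold unionJohnConst; positivity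

theorem unionJohnConst_le (hϱ : 0 < ϱ) (hc : 0 < c) : unionJohnConst ϱ c ≤ ϱ := by
  rw [unionJohnConst, div_le_iff₀ (by positivity)]
  nlinarith [mul_pos hc hϱ]

theorem unionJohnConst_mul_le_max (hϱ : 0 < ϱ) (hϱ1 : ϱ ≤ 1) (hc : 0 < c) (hu : 0 ≤ u) :
    unionJohnConst ϱ c * (Δ / ϱ + u) ≤ max (ϱ * u) (c * Δ - u) := by
  have hden : 0 < 2 + c * ϱ := by positivity
  have hlhs : unionJohnConst ϱ c * (Δ / ϱ + u) = c * ϱ * (Δ + ϱ * u) / (2 + c * ϱ) := by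
    unfold unionJohnConst; field_simp
  rw [hlhs, div_le_iff₀ hden]
  rcases le_total (2 * u) (c * Δ) with h | h
  · refine le_trans ?_ (mul_le_mul_of_nonneg_right (le_max_right _ _) hden.le)
    nlinarith [mul_pos hc hϱ, mul_nonneg hc.le hu, mul_nonneg (mul_nonneg hc.le hu) hϱ.le]
  · refine le_trans ?_ (mul_le_mul_of_nonneg_right (le_max_left _ _) hden.le)
    nlinarith [mul_pos hc hϱ]

theorem ball_unionJohnConst_subset (hϱ : 0 < ϱ) (hϱ1 : ϱ ≤ 1) (hc : 0 < c)
    (hz : ball z (c * Δ) ⊆ U) (hw : ball w (ϱ * u) ⊆ U) (hwz : dist w z ≤ u) {t : ℝ}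
    (ht : t ≤ Δ / ϱ + u) : ball w (unionJohnConst ϱ c * t) ⊆ U := by
  refine (ball_subset_ball <| (mul_le_mul_of_nonneg_left ht (unionJohnConst_pos hϱ hc).le).trans
    (unionJohnConst_mul_le_max hϱ hϱ1 hc (dist_nonneg.trans hwz))).trans ?_
  rcases max_choice (ϱ * u) (c * Δ - u) with h | h <;> rw [h]
  · exact hw
  · exact (ball_subset_ball' (by linarith)).trans hz

theorem ball_pathConcat_reverse_subset {γ σ : ℝ → α} {ℓ M a : ℝ} {D₁ D₂ : Set α}
    (hγ : IsJohnCurve ϱ D₁ γ ℓ) (hσ : IsJohnCurve ϱ D₂ σ M) (hγ₀ : γ 0 = z) (hσ₀ : σ 0 = z)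
    (hz : ball z (c * Δ) ⊆ D₁) (hϱ : 0 < ϱ) (hϱ1 : ϱ ≤ 1) (hc : 0 < c) (ha : a + ℓ ≤ Δ / ϱ) :
    ∀ s ∈ Icc 0 (ℓ + M),
      ball (pathConcat (fun u ↦ γ (ℓ - u)) σ ℓ s) (unionJohnConst ϱ c * (a + s)) ⊆ D₁ ∪ D₂ := by
  have hzU : ball z (c * Δ) ⊆ D₁ ∪ D₂ := hz.trans subset_union_left
  refine forall_mem_Icc_pathConcat
    (P := fun s y ↦ ball y (unionJohnConst ϱ c * (a + s)) ⊆ D₁ ∪ D₂)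
    (by rw [sub_self, hγ₀, hσ₀]) (fun s hs ↦ ?_) (fun s hs ↦ ?_)
  · have hu : ℓ - s ∈ Icc 0 ℓ := ⟨by linarith [hs.2], by linarith [hs.1]⟩
    exact ball_unionJohnConst_subset hϱ hϱ1 hc hzU
      ((hγ.ball_subset _ hu).trans subset_union_left) (hγ₀ ▸ hγ.isArcLength.dist_le_self hu)
      (by linarith [hs.2, hu.1])
  · exact ball_unionJohnConst_subset hϱ hϱ1 hc hzU
      ((hσ.ball_subset s hs).trans subset_union_right) (hσ₀ ▸ hσ.isArcLength.dist_le_self hs)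
      (by linarith)

end Union

section NormedUnion

variable {E : Type*} [NormedAddCommGroup E] [NormedSpace ℝ E] [Nontrivial E]
  {ϱ c : ℝ} {D₁ D₂ : Set E} {p₁ p₂ z : E}

theorem Bornology.IsBounded.nonempty_compl {s : Set E} (hs : IsBounded s) : sᶜ.Nonempty :=
  Set.nonempty_compl.2 fun hs_univ ↦ NormedSpace.unbounded_univ ℝ E (hs_univ ▸ hs)

theorem IsJohnCurve.two_mul_mul_le_diam {γ : ℝ → E} {L : ℝ} (h : IsJohnCurve ϱ D₁ γ L)
    (hb : Bornology.IsBounded D₁) (hϱ : 0 ≤ ϱ) : 2 * (ϱ * L) ≤ diam D₁ :=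
  diam_ball_eq (γ L) (mul_nonneg hϱ h.nonneg) ▸ diam_mono h.ball_end_subset hb

theorem IsJohnCenter.union (h₁ : IsJohnCenter ϱ D₁ p₁) (h₂ : IsJohnCenter ϱ D₂ p₂)
    (hb : Bornology.IsBounded D₁) (hz : z ∈ D₁ ∩ D₂) (hzball : ball z (c * diam D₁) ⊆ D₁)
    (hϱ : 0 < ϱ) (hϱ1 : ϱ ≤ 1) (hc : 0 < c) :
    IsJohnCenter (unionJohnConst ϱ c) (D₁ ∪ D₂) p₂ := by
  have hϱ' := unionJohnConst_le hϱ hc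
  intro x hx
  by_cases hx₂ : x ∈ D₂
  · obtain ⟨γ, L, hγ₀, hγL, hγ⟩ := h₂ x hx₂
    exact ⟨γ, L, hγ₀, hγL, hγ.mono hϱ' subset_union_right⟩
  obtain ⟨γ₁, L₁, hγ₁₀, hγ₁L, hγ₁⟩ := h₁ x (hx.resolve_right hx₂)
  obtain ⟨γ₂, ℓ, hγ₂₀, hγ₂L, hγ₂⟩ := h₁ z hz.1
  obtain ⟨σ, L₂, hσ₀, hσL, hσ⟩ := h₂ z hz.2
  have hlen : L₁ + ℓ ≤ diam D₁ / ϱ := by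
    rw [le_div_iff₀ hϱ]
    linarith [hγ₁.two_mul_mul_le_diam hb hϱ.le, hγ₂.two_mul_mul_le_diam hb hϱ.le]
  have hjoin : γ₂ (ℓ - ℓ) = σ 0 := by rw [sub_self, hγ₂₀, hσ₀]
  have hτ₀ : pathConcat (fun u ↦ γ₂ (ℓ - u)) σ ℓ 0 = p₁ := by
    rw [pathConcat_of_le hγ₂.nonneg, sub_zero, hγ₂L]
  have hτD : MapsTo (pathConcat (fun u ↦ γ₂ (ℓ - u)) σ ℓ) (Icc 0 (ℓ + L₂)) (D₁ ∪ D₂) :=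
    forall_mem_Icc_pathConcat hjoin
      (fun s hs ↦ Or.inl (hγ₂.mapsTo ⟨by linarith [hs.2], by linarith [hs.1]⟩))
      (fun s hs ↦ Or.inr (hσ.mapsTo hs))
  refine ⟨pathConcat γ₁ (pathConcat (fun u ↦ γ₂ (ℓ - u)) σ ℓ) L₁, L₁ + (ℓ + L₂), ?_, ?_,
    (hγ₁.mono hϱ' subset_union_left).append
      (hγ₂.isArcLength.reverse.pathConcat hσ.isArcLength hγ₂.nonneg hjoin)
      (add_nonneg hγ₂.nonneg hσ.nonneg) hτD
      (ball_pathConcat_reverse_subset hγ₂ hσ hγ₂₀ hσ₀ hzball hϱ hϱ1 hc hlen)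
      (hγ₁L.trans hτ₀.symm)⟩
  · rw [pathConcat_of_le hγ₁.nonneg, hγ₁₀]
  · rw [pathConcat_add (hγ₁L.trans hτ₀.symm) (add_nonneg hγ₂.nonneg hσ.nonneg),
      pathConcat_add (γ := fun u ↦ γ₂ (ℓ - u)) hjoin hσ.nonneg, hσL]

end NormedUnion

theorem ball_subset_layer_sdiff_layer {α : Type*} [PseudoMetricSpace α] {Ω : Set α} {y : α}
    {δ : ℝ} (hy : infDist y Ωᶜ = 2 * δ) :
    ball y δ ⊆ {x ∈ Ω | infDist x Ωᶜ ≤ 3 * δ} \ {x ∈ Ω | infDist x Ωᶜ ≤ δ} := by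
  intro x hx
  rw [mem_ball] at hx
  have hlow := infDist_le_infDist_add_dist (s := Ωᶜ) (x := y) (y := x)
  have hupp := infDist_le_infDist_add_dist (s := Ωᶜ) (x := x) (y := y)
  rw [dist_comm] at hlow
  have hxΩ : x ∈ Ω := by
    by_contra hxΩ
    rw [infDist_zero_of_mem (show x ∈ Ωᶜ from hxΩ)] at hlow
    linarith [dist_nonneg (x := x) (y := y)]
  exact ⟨⟨hxΩ, by linarith⟩, fun hx' ↦ by linarith [hx'.2]⟩

/-- The factor by which the measure of a boundary layer of a `ϱ`-John domain in dimension `n`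
at least shrinks when its width is divided by `3`; `8 / ϱ` is the Vitali enlargement `4` times
the ratio `2 / ϱ` of covering to packing radius. -/
noncomputable def johnLayerRatio (ϱ : ℝ) (n : ℕ) : ℝ := (8 / ϱ) ^ n / (1 + (8 / ϱ) ^ n)

theorem johnLayerRatio_nonneg {ϱ : ℝ} (hϱ : 0 ≤ ϱ) (n : ℕ) : 0 ≤ johnLayerRatio ϱ n := by
  unfold johnLayerRatio; positivity

theorem johnLayerRatio_lt_one {ϱ : ℝ} (hϱ : 0 ≤ ϱ) (n : ℕ) : johnLayerRatio ϱ n < 1 := by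
  unfold johnLayerRatio
  rw [div_lt_one (by positivity)]
  linarith

section Measure

variable {E : Type*} [NormedAddCommGroup E] [NormedSpace ℝ E] [FiniteDimensional ℝ E]
  [Nontrivial E] [MeasurableSpace E] [BorelSpace E] (μ : Measure E) [μ.IsAddHaarMeasure]

theorem measure_le_of_forall_exists_ball_subset {A B : Set E} {r R : ℝ} (hr : 0 < r)
    (hrR : r ≤ R) (h : ∀ a ∈ A, ∃ y, dist a y ≤ R ∧ ball y r ⊆ B) :
    μ A ≤ ENNReal.ofReal ((4 * R / r) ^ Module.finrank ℝ E) * μ B := by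
  choose! y hyA hyB using h
  obtain ⟨u, huA, hdisj, hcov⟩ := Vitali.exists_disjoint_subfamily_covering_enlargement_closedBall
    A y (fun _ ↦ R) R (fun _ _ ↦ le_rfl) 4 (by norm_num)
  have hu : u.Countable := hdisj.countable_of_nonempty_interior fun a _ ↦
    ⟨y a, ball_subset_interior_closedBall (mem_ball_self (hr.trans_le hrR))⟩
  have hAcov : A ⊆ ⋃ b ∈ u, closedBall (y b) ((4 * R / r) * r) := fun a ha ↦ by
    obtain ⟨b, hb, hsub⟩ := hcov a ha
    rw [div_mul_cancel₀ _ hr.ne']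
    exact mem_biUnion hb (hsub (mem_closedBall.2 (hyA a ha)))
  have hscale : ∀ b, μ (closedBall (y b) ((4 * R / r) * r)) =
      ENNReal.ofReal ((4 * R / r) ^ Module.finrank ℝ E) * μ (ball (y b) r) := fun b ↦ by
    rw [Measure.addHaar_closedBall_mul μ _ (div_nonneg (by linarith) hr.le) hr.le,
      ← Measure.addHaar_closedBall_center μ (y b), Measure.addHaar_closedBall_eq_addHaar_ball]
  calc μ A ≤ μ (⋃ b ∈ u, closedBall (y b) ((4 * R / r) * r)) := measure_mono hAcov
    _ ≤ ∑' b : u, μ (closedBall (y b) ((4 * R / r) * r)) := measure_biUnion_le μ hu _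
    _ = ENNReal.ofReal ((4 * R / r) ^ Module.finrank ℝ E) * ∑' b : u, μ (ball (y b) r) := by
      simp only [hscale, ENNReal.tsum_mul_left]
    _ = ENNReal.ofReal ((4 * R / r) ^ Module.finrank ℝ E) * μ (⋃ b ∈ u, ball (y b) r) := by
      rw [measure_biUnion hu (hdisj.mono fun b ↦ ball_subset_closedBall.trans
        (closedBall_subset_closedBall hrR)) fun _ _ ↦ measurableSet_ball]
    _ ≤ ENNReal.ofReal ((4 * R / r) ^ Module.finrank ℝ E) * μ B := by
      gcongr
      exact iUnion₂_subset fun b hb ↦ hyB b (huA hb)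

variable {ϱ δ : ℝ} {Ω : Set E} {p : E}

theorem IsJohnCenter.measureReal_layer_le (h : IsJohnCenter ϱ Ω p) (hΩ : MeasurableSet Ω)
    (hb : Bornology.IsBounded Ω) (hϱ : 0 < ϱ) (hϱ2 : ϱ ≤ 2) (hδ : 0 < δ)
    (hδp : 2 * δ ≤ infDist p Ωᶜ) :
    μ.real {x ∈ Ω | infDist x Ωᶜ ≤ δ} ≤
      johnLayerRatio ϱ (Module.finrank ℝ E) * μ.real {x ∈ Ω | infDist x Ωᶜ ≤ 3 * δ} := by
  have hne := hb.nonempty_compl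
  set A := {x ∈ Ω | infDist x Ωᶜ ≤ δ}
  set A₃ := {x ∈ Ω | infDist x Ωᶜ ≤ 3 * δ}
  set C := (8 / ϱ) ^ Module.finrank ℝ E
  have hAA₃ : A ⊆ A₃ := fun x hx ↦ ⟨hx.1, by linarith [hx.2]⟩
  have hA₃ : μ A₃ ≠ ⊤ := (measure_mono fun x hx ↦ hx.1 : μ A₃ ≤ μ Ω).trans_lt
    hb.measure_lt_top |>.ne
  have hAm : MeasurableSet A :=
    hΩ.inter ((continuous_infDist_pt _).measurable measurableSet_Iic)
  have hcover : ∀ a ∈ A, ∃ y, dist a y ≤ 2 * δ / ϱ ∧ ball y δ ⊆ A₃ \ A := fun a ha ↦ by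
    obtain ⟨y, hay, hy⟩ := h.exists_dist_le_of_infDist_le hϱ hne ha.1 (by linarith [ha.2]) hδp
    exact ⟨y, hay, ball_subset_layer_sdiff_layer hy⟩
  have hle := measure_le_of_forall_exists_ball_subset μ hδ
    (by rw [le_div_iff₀ hϱ]; nlinarith) hcover
  rw [show 4 * (2 * δ / ϱ) / δ = 8 / ϱ by field_simp; ring] at hle
  have hleReal : μ.real A ≤ C * (μ.real A₃ - μ.real A) := by
    rw [← measureReal_sdiff hAA₃ hAm hA₃, ← ENNReal.toReal_ofReal (by positivity : 0 ≤ C)]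
    exact (ENNReal.toReal_mono (ENNReal.mul_ne_top ENNReal.ofReal_ne_top
      (measure_ne_top_of_subset sdiff_subset hA₃)) hle).trans_eq ENNReal.toReal_mul
  rw [johnLayerRatio, div_mul_eq_mul_div, le_div_iff₀ (by positivity)]
  linarith

theorem IsJohnCenter.measureReal_layer_le_pow (h : IsJohnCenter ϱ Ω p) (hΩ : MeasurableSet Ω)
    (hb : Bornology.IsBounded Ω) (hϱ : 0 < ϱ) (hϱ2 : ϱ ≤ 2) (k : ℕ) (hδ : 0 < δ)
    (hk : 3 ^ k * δ ≤ infDist p Ωᶜ) :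
    μ.real {x ∈ Ω | infDist x Ωᶜ ≤ δ} ≤ johnLayerRatio ϱ (Module.finrank ℝ E) ^ k *
      μ.real {x ∈ Ω | infDist x Ωᶜ ≤ 3 ^ k * δ} := by
  induction k generalizing δ with
  | zero => simp
  | succ k ih =>
    have h3k : (1 : ℝ) ≤ 3 ^ k := one_le_pow₀ (by norm_num)
    have hθ := johnLayerRatio_nonneg hϱ.le (Module.finrank ℝ E)
    calc μ.real {x ∈ Ω | infDist x Ωᶜ ≤ δ}
        ≤ johnLayerRatio ϱ (Module.finrank ℝ E) * μ.real {x ∈ Ω | infDist x Ωᶜ ≤ 3 * δ} :=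
          h.measureReal_layer_le μ hΩ hb hϱ hϱ2 hδ (by rw [pow_succ] at hk; nlinarith)
      _ ≤ johnLayerRatio ϱ (Module.finrank ℝ E) * (johnLayerRatio ϱ (Module.finrank ℝ E) ^ k *
          μ.real {x ∈ Ω | infDist x Ωᶜ ≤ 3 ^ k * (3 * δ)}) := by
          gcongr
          exact ih (by positivity) (by rwa [pow_succ, mul_assoc] at hk)
      _ = johnLayerRatio ϱ (Module.finrank ℝ E) ^ (k + 1) *
          μ.real {x ∈ Ω | infDist x Ωᶜ ≤ 3 ^ (k + 1) * δ} := by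
          rw [pow_succ, pow_succ, mul_assoc (3 ^ k : ℝ)]; ring

theorem IsJohnCenter.exists_ball_subset_of_measureReal_le (h : IsJohnCenter ϱ Ω p) (hp : p ∈ Ω)
    (hΩ : IsOpen Ω) (hb : Bornology.IsBounded Ω) (hϱ : 0 < ϱ) (hϱ2 : ϱ ≤ 2) {S : Set E}
    (hS : S ⊆ Ω) {c₀ : ℝ} {k : ℕ} (hk : johnLayerRatio ϱ (Module.finrank ℝ E) ^ k * c₀ < 1)
    (hvol : μ.real Ω ≤ c₀ * μ.real S) :
    ∃ z ∈ S, ball z (infDist p Ωᶜ / 3 ^ k) ⊆ Ω := by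
  have hne := hb.nonempty_compl
  have hΩfin : μ Ω ≠ ⊤ := hb.measure_lt_top.ne
  have hΩpos : 0 < μ.real Ω := ENNReal.toReal_pos (hΩ.measure_pos μ ⟨p, hp⟩).ne' hΩfin
  have hSpos : 0 < μ.real S := measureReal_nonneg.lt_of_ne fun hS0 ↦ by
    rw [← hS0, mul_zero] at hvol
    linarith
  obtain ⟨ε, hε, hεΩ⟩ := Metric.isOpen_iff.1 hΩ p hp
  set δ := infDist p Ωᶜ / 3 ^ k
  have hδ : 0 < δ := div_pos (hε.trans_le (le_infDist_compl_of_ball_subset hne hεΩ))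
    (by positivity)
  have hlayer := h.measureReal_layer_le_pow μ hΩ.measurableSet hb hϱ hϱ2 k hδ
    (by rw [mul_div_cancel₀ _ (by positivity)])
  have hsmall : μ.real {x ∈ Ω | infDist x Ωᶜ ≤ δ} < μ.real S :=
    calc _ ≤ johnLayerRatio ϱ (Module.finrank ℝ E) ^ k * μ.real Ω :=
          hlayer.trans (mul_le_mul_of_nonneg_left (measureReal_mono (fun x hx ↦ hx.1) hΩfin)
            (pow_nonneg (johnLayerRatio_nonneg hϱ.le _) _))
      _ ≤ johnLayerRatio ϱ (Module.finrank ℝ E) ^ k * c₀ * μ.real S := by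
          rw [mul_assoc]; gcongr; exact pow_nonneg (johnLayerRatio_nonneg hϱ.le _) _
      _ < μ.real S := mul_lt_of_lt_one_left hSpos hk
  obtain ⟨z, hzS, hz⟩ := not_subset.1 fun hsub ↦
    (measureReal_mono hsub (measure_ne_top_of_subset (fun x hx ↦ hx.1) hΩfin)).not_gt hsmall
  have hzδ : δ < infDist z Ωᶜ := lt_of_not_ge fun hle ↦ hz ⟨hS hzS, hle⟩
  exact ⟨z, hzS, (ball_subset_ball hzδ.le).trans ball_infDist_compl_subset⟩

end Measure

section JohnDomain

variable {d : ℕ} {ϱ ϱ' : ℝ} {Ω D₁ D₂ : Set (EuclideanSpace ℝ (Fin d))}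

theorem isJohnDomain_iff : IsJohnDomain ϱ Ω ↔ IsOpen Ω ∧ IsConnected Ω ∧
    Bornology.IsBounded Ω ∧ ∃ p ∈ Ω, IsJohnCenter ϱ Ω p := by
  refine and_congr_right' <| and_congr_right' <| and_congr_right' <|
    exists_congr fun p ↦ and_congr_right fun _ ↦ ⟨fun h x hx ↦ ?_, fun h x hx ↦ ?_⟩
  · rcases eq_or_ne x p with rfl | hxp
    · exact ⟨_, 0, rfl, rfl, .const hx⟩
    · obtain ⟨L, hL, γ, hγ₀, hγL, hmaps, harc, hball⟩ := h x ⟨hx, hxp⟩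
      exact ⟨γ, L, hγ₀, hγL, hL, hmaps, harc, hball⟩
  · obtain ⟨γ, L, hγ₀, hγL, hγ⟩ := h x hx.1
    exact ⟨L, hγ.nonneg, γ, hγ₀, hγL, hγ.mapsTo, hγ.isArcLength, hγ.ball_subset⟩

theorem IsJohnDomain.mono (h : IsJohnDomain ϱ Ω) (hϱ : ϱ' ≤ ϱ) : IsJohnDomain ϱ' Ω := by
  obtain ⟨ho, hc, hb, p, hp, hj⟩ := isJohnDomain_iff.1 h
  exact isJohnDomain_iff.2 ⟨ho, hc, hb, p, hp, hj.mono hϱ⟩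

theorem IsJohnDomain.union_of_volume_le [Nontrivial (EuclideanSpace ℝ (Fin d))]
    (h₁ : IsJohnDomain ϱ D₁) (h₂ : IsJohnDomain ϱ D₂) (hϱ : 0 < ϱ) (hϱ1 : ϱ ≤ 1) {c₀ : ℝ}
    (hc₀ : 0 ≤ c₀) {k : ℕ} (hk : johnLayerRatio ϱ d ^ k * c₀ < 1)
    (hvol : volume D₁ ≤ ENNReal.ofReal c₀ * volume (D₁ ∩ D₂)) :
    IsJohnDomain (unionJohnConst ϱ (ϱ / (2 * 3 ^ k))) (D₁ ∪ D₂) := by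
  obtain ⟨ho₁, hc₁, hb₁, p₁, hp₁, hj₁⟩ := isJohnDomain_iff.1 h₁
  obtain ⟨ho₂, hc₂, hb₂, p₂, hp₂, hj₂⟩ := isJohnDomain_iff.1 h₂
  have hvolReal : volume.real D₁ ≤ c₀ * volume.real (D₁ ∩ D₂) := by
    have hfin : volume (D₁ ∩ D₂) ≠ ⊤ := (hb₁.subset inter_subset_left).measure_lt_top.ne
    simpa [Measure.real, ENNReal.toReal_mul, ENNReal.toReal_ofReal hc₀] using
      ENNReal.toReal_mono (ENNReal.mul_ne_top ENNReal.ofReal_ne_top hfin) hvol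
  obtain ⟨z, hz, hzball⟩ := hj₁.exists_ball_subset_of_measureReal_le volume hp₁ ho₁ hb₁ hϱ
    (by linarith) inter_subset_left (by rwa [finrank_euclideanSpace_fin]) hvolReal
  have hdeep : ball z (ϱ / (2 * 3 ^ k) * diam D₁) ⊆ D₁ := by
    refine (ball_subset_ball ?_).trans hzball
    rw [div_mul_eq_mul_div, div_le_div_iff₀ (by positivity) (by positivity)]
    nlinarith [hj₁.mul_diam_le hϱ hb₁.nonempty_compl, pow_pos (three_pos (α := ℝ)) k]
  exact isJohnDomain_iff.2 ⟨ho₁.union ho₂, IsConnected.union ⟨z, hz⟩ hc₁ hc₂,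
    hb₁.union hb₂, p₂, Or.inr hp₂, hj₁.union hj₂ hb₁ hz hdeep hϱ hϱ1 (by positivity)⟩

end JohnDomain

/-- **Lemma (union of two John domains).** For `ϱ, c₀ > 0` there is `ϱ' = ϱ'(ϱ, c₀) > 0`
such that if `D₁, D₂ ⊆ ℝ^d` are `ϱ`-John domains with
`min {|D₁|, |D₂|} ≤ c₀ |D₁ ∩ D₂|`, then `D₁ ∪ D₂` is a `ϱ'`-John domain. -/
theorem john_domain_union (d : ℕ) (ϱ c₀ : ℝ) (hϱ : 0 < ϱ) (hc : 0 < c₀) :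
    ∃ ϱ' : ℝ, 0 < ϱ' ∧
      ∀ D₁ D₂ : Set (EuclideanSpace ℝ (Fin d)),
        IsJohnDomain ϱ D₁ → IsJohnDomain ϱ D₂ →
        min (volume D₁) (volume D₂) ≤ ENNReal.ofReal c₀ * volume (D₁ ∩ D₂) →
        IsJohnDomain ϱ' (D₁ ∪ D₂) := by
  rcases subsingleton_or_nontrivial (EuclideanSpace ℝ (Fin d)) with hE | hE
  · refine ⟨ϱ, hϱ, fun D₁ D₂ h₁ _ _ ↦ ?_⟩
    obtain ⟨p, hp⟩ := h₁.2.1.nonempty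
    rwa [union_eq_left.2 fun x _ ↦ Subsingleton.elim p x ▸ hp]
  set ϱ₁ := min ϱ 1
  have hϱ₁ : 0 < ϱ₁ := lt_min hϱ one_pos
  obtain ⟨k, hk⟩ := exists_pow_lt_of_lt_one (inv_pos.2 hc) (johnLayerRatio_lt_one hϱ₁.le d)
  refine ⟨unionJohnConst ϱ₁ (ϱ₁ / (2 * 3 ^ k)), unionJohnConst_pos hϱ₁ (by positivity),
    fun D₁ D₂ h₁ h₂ hvol ↦ ?_⟩
  wlog hle : volume D₁ ≤ volume D₂ generalizing D₁ D₂
  · rw [union_comm]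
    exact this D₂ D₁ h₂ h₁ (by rwa [min_comm, inter_comm]) (le_of_not_ge hle)
  exact (h₁.mono (min_le_left ϱ 1)).union_of_volume_le (h₂.mono (min_le_left ϱ 1)) hϱ₁
    (min_le_right ϱ 1) hc.le ((lt_inv_mul_iff₀' hc).1 (by rwa [mul_one]))
    (by rwa [min_eq_left hle] at hvol)
end

section
/- Every convex polygon P ⊂ ℝ² contains a ball with radius ¼ min_{R ∈ SO(2)} |P|_{Π,R}. -/
open Set Metric MeasureTheory
open scoped ENNReal NNReal

/-!
Let `h` be the support function of the compact convex set `K ⊆ ℝᵈ` and `w(u) = h(u) + h(-u)` its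
width in direction `u`. The ball of radius `ρ` about `x` lies in `K` iff `x` lies in every
halfspace `H_u = {⟪u, ·⟫ ≤ h(u) - ρ}`, `‖u‖ = 1`. By Helly's theorem (and compactness) it suffices
that any `d + 1` of these halfspaces meet. If `H_{u₁}, …, H_{u_{d+1}}` do not, a theorem of the
alternative gives weights `μᵢ ≥ 0`, not all zero, with `∑ μᵢ uᵢ = 0` and `∑ μᵢ (h(uᵢ) - ρ) ≤ 0`.
For the largest weight `μⱼ ≥ ∑ μᵢ / (d + 1)`, sublinearity of `h` gives
`∑ μᵢ h(uᵢ) ≥ μⱼ w(uⱼ)`, which exceeds `ρ ∑ μᵢ` as soon as `(d + 1) ρ < w`. So in the plane a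
convex body of minimal width `w` contains balls of every radius below `w / 3`, e.g. `w / 4`.
-/

open scoped RealInnerProductSpace
open Bornology

theorem LinearMap.eq_zero_of_forall_le_apply {E : Type*} [AddCommGroup E] [Module ℝ E]
    (g : E →ₗ[ℝ] ℝ) {s : ℝ} (h : ∀ x, s ≤ g x) (x : E) : g x = 0 := by
  by_contra hx
  have := h (((s - 1) / g x) • x)
  rw [map_smul, smul_eq_mul, div_mul_cancel₀ _ hx] at this
  linarith

theorem exists_nonneg_combination_of_not_exists_le {ι E : Type*} [Fintype ι] [AddCommGroup E]
    [Module ℝ E] (f : ι → E →ₗ[ℝ] ℝ) (c : ι → ℝ) (h : ¬ ∃ x, ∀ i, f i x ≤ c i) :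
    ∃ μ : ι → ℝ, (∀ i, 0 ≤ μ i) ∧ 0 < ∑ i, μ i ∧ (∀ x, ∑ i, μ i * f i x = 0) ∧
      ∑ i, μ i * c i ≤ 0 := by
  classical
  -- Separate the open box `{y | y < c}` from the range of `x ↦ (f i x)ᵢ`; the coefficients of
  -- the separating functional are the weights.
  set O : Set (ι → ℝ) := univ.pi fun i => Iio (c i)
  set Φ : E →ₗ[ℝ] ι → ℝ := LinearMap.pi f
  have hdisj : Disjoint O (range Φ) := by
    refine Set.disjoint_right.2 ?_
    rintro _ ⟨x, rfl⟩ hx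
    exact h ⟨x, fun i => (hx i trivial).le⟩
  obtain ⟨F, s, hFO, hFΦ⟩ := geometric_hahn_banach_open
    (convex_pi fun i _ => convex_Iio (c i)) (isOpen_set_pi finite_univ fun i _ => isOpen_Iio)
    (LinearMap.range Φ).convex hdisj
  set e : ι → ι → ℝ := fun i j => if i = j then 1 else 0
  set μ : ι → ℝ := fun i => F (e i)
  have hF : ∀ y, F y = ∑ i, μ i * y i := fun y => by
    simpa [μ, mul_comm] using LinearMap.pi_apply_eq_sum_univ F.toLinearMap y
  have hs : s ≤ 0 := by simpa using hFΦ 0 (zero_mem _)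
  have hFΦ_zero : ∀ x, ∑ i, μ i * f i x = 0 := fun x => by
    simpa [hF, Φ] using (F.toLinearMap ∘ₗ Φ).eq_zero_of_forall_le_apply (fun x => hFΦ _ ⟨x, rfl⟩) x
  set y₀ : ι → ℝ := fun i => c i - 1
  have hy₀ : y₀ ∈ O := fun i _ => by simp [y₀]
  have hFy₀ : F y₀ < 0 := (hFO y₀ hy₀).trans_le hs
  have hμ : ∀ i, 0 ≤ μ i := by
    intro i
    by_contra! hi
    have hmem : y₀ - (F y₀ / μ i) • e i ∈ O := by
      intro k _
      have ht : 0 ≤ F y₀ / μ i := div_nonneg_of_nonpos hFy₀.le hi.le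
      have he : 0 ≤ e i k := by simp only [e]; split_ifs <;> norm_num
      simp only [Pi.sub_apply, Pi.smul_apply, smul_eq_mul, mem_Iio, y₀]
      linarith [mul_nonneg ht he]
    have := hFO _ hmem
    rw [map_sub, map_smul, smul_eq_mul, div_mul_cancel₀ _ hi.ne] at this
    linarith
  refine ⟨μ, hμ, ?_, hFΦ_zero, ?_⟩
  · refine (Finset.sum_nonneg fun i _ => hμ i).lt_of_ne fun hsum => hFy₀.ne ?_
    simp [hF, (Finset.sum_eq_zero_iff_of_nonneg fun i _ => hμ i).1 hsum.symm]
  · have hc : c ∈ closure O := by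
      rw [closure_pi_set]; exact fun i _ => by simp
    have hFc : F c ≤ s :=
      closure_minimal (fun y hy => (hFO y hy).le) (isClosed_le F.continuous continuous_const) hc
    rw [← hF]
    exact hFc.trans hs

noncomputable section SupportFunction

variable {E : Type*} [NormedAddCommGroup E] [InnerProductSpace ℝ E] {K : Set E} {ρ : ℝ}

def supportFun (K : Set E) (u : E) : ℝ := sSup ((⟪u, ·⟫) '' K)

def supportWidth (K : Set E) (u : E) : ℝ := supportFun K u + supportFun K (-u)

def supportHalfspace (K : Set E) (ρ : ℝ) (u : E) : Set E := {x | ⟪u, x⟫ ≤ supportFun K u - ρ}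

theorem inner_le_supportFun (hK : IsBounded K) {x : E} (hx : x ∈ K) (u : E) :
    ⟪u, x⟫ ≤ supportFun K u :=
  le_csSup ((innerSL ℝ u).lipschitz.isBounded_image hK).bddAbove ⟨x, hx, rfl⟩

theorem supportFun_le (hne : K.Nonempty) {u : E} {c : ℝ} (h : ∀ x ∈ K, ⟪u, x⟫ ≤ c) :
    supportFun K u ≤ c :=
  csSup_le (hne.image _) (forall_mem_image.2 h)

theorem convex_supportHalfspace (K : Set E) (ρ : ℝ) (u : E) :
    Convex ℝ (supportHalfspace K ρ u) :=
  convex_halfSpace_le (innerₗ E u).isLinear _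

theorem isClosed_supportHalfspace (K : Set E) (ρ : ℝ) (u : E) :
    IsClosed (supportHalfspace K ρ u) :=
  isClosed_le (continuous_const.inner continuous_id) continuous_const

theorem mul_supportWidth_le_sum {ι : Type*} [Fintype ι] (hne : K.Nonempty)
    (hK : IsBounded K) {u : ι → E} {μ : ι → ℝ} (hμ : ∀ i, 0 ≤ μ i)
    (hsum : ∀ x, ∑ i, μ i * ⟪u i, x⟫ = 0) {j : ι} (hj : 0 < μ j) :
    μ j * supportWidth K (u j) ≤ ∑ i, μ i * supportFun K (u i) := by
  have key : ∀ x ∈ K, μ j * (supportFun K (u j) + ⟪-u j, x⟫) ≤ ∑ i, μ i * supportFun K (u i) := by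
    intro x hx
    have := Finset.single_le_sum (f := fun i => μ i * (supportFun K (u i) - ⟪u i, x⟫))
      (fun i _ => mul_nonneg (hμ i) (sub_nonneg.2 (inner_le_supportFun hK hx _)))
      (Finset.mem_univ j)
    simp only [mul_sub, Finset.sum_sub_distrib, hsum x] at this
    rw [inner_neg_left]
    linarith
  have hneg : supportFun K (-u j) ≤ (∑ i, μ i * supportFun K (u i)) / μ j - supportFun K (u j) :=
    supportFun_le hne fun x hx => by
      rw [le_sub_iff_add_le', le_div_iff₀ hj, mul_comm]
      exact key x hx
  rw [le_sub_iff_add_le', le_div_iff₀ hj] at hneg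
  rw [supportWidth]
  linarith

theorem nonempty_iInter_supportHalfspace_of_card_le {ι : Type*} [Fintype ι] (hne : K.Nonempty)
    (hK : IsBounded K) (hρ : 0 ≤ ρ) {n : ℕ} (hι : Fintype.card ι ≤ n) (u : ι → E)
    (hw : ∀ i, n * ρ < supportWidth K (u i)) :
    (⋂ i, supportHalfspace K ρ (u i)).Nonempty := by
  by_contra hempty
  obtain ⟨μ, hμ, hpos, hsum, hc⟩ := exists_nonneg_combination_of_not_exists_le
    (fun i => innerₗ E (u i)) (fun i => supportFun K (u i) - ρ)
    fun ⟨x, hx⟩ => hempty ⟨x, Set.mem_iInter.2 hx⟩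
  simp only [innerₗ_apply_apply] at hsum
  obtain ⟨j, -, hj⟩ :=
    Finset.exists_max_image Finset.univ μ (Finset.nonempty_of_sum_ne_zero hpos.ne')
  have hμj : ∑ i, μ i ≤ n * μ j := calc
    ∑ i, μ i ≤ ∑ _i : ι, μ j := Finset.sum_le_sum fun i hi => hj i hi
    _ = Fintype.card ι * μ j := by simp
    _ ≤ n * μ j := mul_le_mul_of_nonneg_right (by exact_mod_cast hι) (hμ j)
  have hμj_pos : 0 < μ j := pos_of_mul_pos_right (hpos.trans_le hμj) n.cast_nonneg
  have hsupp := mul_supportWidth_le_sum hne hK hμ hsum hμj_pos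
  have hwj := mul_lt_mul_of_pos_left (hw j) hμj_pos
  have hρsum := mul_le_mul_of_nonneg_left hμj hρ
  simp only [mul_sub, Finset.sum_sub_distrib, ← Finset.sum_mul] at hc
  linarith

end SupportFunction

theorem OrthonormalBasis.norm_le_sum_abs_inner {ι E : Type*} [Fintype ι] [NormedAddCommGroup E]
    [InnerProductSpace ℝ E] (b : OrthonormalBasis ι ℝ E) (x : E) : ‖x‖ ≤ ∑ i, |⟪b i, x⟫| := by
  conv_lhs => rw [← b.sum_repr' x]
  refine (norm_sum_le _ _).trans_eq (Finset.sum_congr rfl fun i _ => ?_)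
  rw [norm_smul, b.orthonormal.1 i, mul_one, Real.norm_eq_abs]

section InnerParallelBody

variable {E : Type*} [NormedAddCommGroup E] [InnerProductSpace ℝ E] [FiniteDimensional ℝ E]
  {K : Set E} {ρ : ℝ}

theorem nonempty_biInter_supportHalfspace (hne : K.Nonempty) (hK : IsBounded K) (hρ : 0 ≤ ρ)
    (hw : ∀ u : E, ‖u‖ = 1 → (Module.finrank ℝ E + 1) * ρ < supportWidth K u)
    (s : Finset E) (hs : ∀ u ∈ s, ‖u‖ = 1) :
    (⋂ u ∈ s, supportHalfspace K ρ u).Nonempty := by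
  refine Convex.helly_theorem' (fun u _ => convex_supportHalfspace K ρ u) fun I hI hcard => ?_
  rw [← Finset.set_biInter_coe, Set.biInter_eq_iInter]
  exact nonempty_iInter_supportHalfspace_of_card_le hne hK hρ (n := Module.finrank ℝ E + 1)
    (by simpa using hcard) Subtype.val fun u => by exact_mod_cast hw u (hs u (hI u.2))

theorem isCompact_iInter_supportHalfspace_basis {ι : Type*} [Fintype ι]
    (b : OrthonormalBasis ι ℝ E) :
    IsCompact (⋂ i, supportHalfspace K ρ (b i) ∩ supportHalfspace K ρ (-b i)) := by
  refine Metric.isCompact_of_isClosed_isBounded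
    (isClosed_iInter fun i => (isClosed_supportHalfspace ..).inter (isClosed_supportHalfspace ..))
    ((isBounded_iff_forall_norm_le).2 ⟨∑ i, (|supportFun K (b i) - ρ| + |supportFun K (-b i) - ρ|),
      fun x hx => (b.norm_le_sum_abs_inner x).trans (Finset.sum_le_sum fun i _ => ?_)⟩)
  have hpos : ⟪b i, x⟫ ≤ supportFun K (b i) - ρ := (Set.mem_iInter.1 hx i).1
  have hneg : ⟪-b i, x⟫ ≤ supportFun K (-b i) - ρ := (Set.mem_iInter.1 hx i).2
  rw [inner_neg_left] at hneg
  rw [abs_le]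
  constructor <;> linarith [le_abs_self (supportFun K (b i) - ρ),
    le_abs_self (supportFun K (-b i) - ρ), abs_nonneg (supportFun K (b i) - ρ),
    abs_nonneg (supportFun K (-b i) - ρ)]

theorem nonempty_iInter_supportHalfspace (hne : K.Nonempty) (hK : IsBounded K) (hρ : 0 ≤ ρ)
    (hw : ∀ u : E, ‖u‖ = 1 → (Module.finrank ℝ E + 1) * ρ < supportWidth K u) :
    (⋂ u : sphere (0 : E) 1, supportHalfspace K ρ u).Nonempty := by
  classical
  set b := stdOrthonormalBasis ℝ E
  refine ((isCompact_iInter_supportHalfspace_basis (K := K) (ρ := ρ) b).inter_iInter_nonempty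
    (fun u : sphere (0 : E) 1 => supportHalfspace K ρ u) (fun u => isClosed_supportHalfspace K ρ u)
    fun I => ?_).mono inter_subset_right
  set s : Finset E :=
    I.map (Function.Embedding.subtype _) ∪ Finset.univ.image b ∪ Finset.univ.image (-b ·)
  refine (nonempty_biInter_supportHalfspace hne hK hρ hw s ?_).mono ?_
  · intro u hu
    simp only [s, Finset.mem_union, Finset.mem_map, Finset.mem_image, Finset.mem_univ, true_and,
      Function.Embedding.coe_subtype] at hu
    rcases hu with (⟨w, -, rfl⟩ | ⟨i, rfl⟩) | ⟨i, rfl⟩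
    · exact mem_sphere_zero_iff_norm.1 w.2
    · exact b.orthonormal.1 i
    · simp [b.orthonormal.1 i]
  · intro x hx
    rw [Set.mem_iInter₂] at hx
    exact ⟨Set.mem_iInter.2 fun i => ⟨hx _ (by simp [s]), hx _ (by simp [s])⟩,
      Set.mem_iInter₂.2 fun u hu => hx _ (by simp [s, hu])⟩

theorem ball_subset_of_mem_iInter_supportHalfspace (hconv : Convex ℝ K) (hcl : IsClosed K)
    (hne : K.Nonempty) {x : E} (hx : x ∈ ⋂ u : sphere (0 : E) 1, supportHalfspace K ρ u) :
    ball x ρ ⊆ K := by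
  intro y hy
  by_contra hyK
  obtain ⟨f, s, hfK, hfy⟩ := geometric_hahn_banach_closed_point hconv hcl hyK
  set v := (InnerProductSpace.toDual ℝ E).symm f
  have hv : ∀ z, ⟪v, z⟫ = f z := fun z => InnerProductSpace.toDual_symm_apply
  have hv0 : 0 < ‖v‖ := by
    refine norm_pos_iff.2 fun h0 => ?_
    obtain ⟨p, hp⟩ := hne
    have := (hfK p hp).trans hfy
    rw [← hv, ← hv, h0, inner_zero_left, inner_zero_left] at this
    exact this.false
  set u := ‖v‖⁻¹ • v
  have hu : ‖u‖ = 1 := by rw [norm_smul, norm_inv, norm_norm, inv_mul_cancel₀ hv0.ne']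
  have hinner : ∀ z, ⟪u, z⟫ = ‖v‖⁻¹ * f z := fun z => by rw [real_inner_smul_left, hv]
  have hsupp : supportFun K u ≤ ‖v‖⁻¹ * s := supportFun_le hne fun z hz => by
    rw [hinner]; exact mul_le_mul_of_nonneg_left (hfK z hz).le (inv_nonneg.2 hv0.le)
  have hxu : ⟪u, x⟫ ≤ supportFun K u - ρ := Set.mem_iInter.1 hx ⟨u, by simpa using hu⟩
  have hyx : ⟪u, y - x⟫ < ρ := calc
    ⟪u, y - x⟫ ≤ ‖u‖ * ‖y - x‖ := real_inner_le_norm _ _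
    _ < ρ := by rwa [hu, one_mul, ← dist_eq_norm]
  have hy' : ‖v‖⁻¹ * s < ⟪u, y⟫ := by rw [hinner]; gcongr
  rw [inner_sub_right] at hyx
  linarith

theorem exists_ball_subset_of_mul_lt_supportWidth (hconv : Convex ℝ K) (hcl : IsClosed K)
    (hK : IsBounded K) (hne : K.Nonempty) (hρ : 0 ≤ ρ)
    (hw : ∀ u : E, ‖u‖ = 1 → (Module.finrank ℝ E + 1) * ρ < supportWidth K u) :
    ∃ x, ball x ρ ⊆ K :=
  let ⟨x, hx⟩ := nonempty_iInter_supportHalfspace hne hK hρ hw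
  ⟨x, ball_subset_of_mem_iInter_supportHalfspace hconv hcl hne hx⟩

end InnerParallelBody

theorem minWidth_le_supportWidth {K : Set Pt} (hne : K.Nonempty)
    (hK : IsBounded K) {u : Pt} (hu : ‖u‖ = 1) :
    minWidth K ≤ supportWidth K u := by
  rw [supportWidth]
  set z : ℂ := ⟨u 0, u 1⟩
  have hz : ‖z‖ = 1 := by
    have hsq : ‖u‖ ^ 2 = u 0 ^ 2 + u 1 ^ 2 := by
      simp [EuclideanSpace.norm_sq_eq, Fin.sum_univ_two]
    rw [Complex.norm_def, Complex.normSq_mk, Real.sqrt_eq_one]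
    nlinarith
  have hcos : Real.cos z.arg = u 0 := by simpa [hz] using Complex.norm_mul_cos_arg z
  have hsin : Real.sin z.arg = u 1 := by simpa [hz] using Complex.norm_mul_sin_arg z
  have hinner : ∀ x : Pt, ⟪u, x⟫ = u 0 * x 0 + u 1 * x 1 := fun x => by
    simp [PiLp.inner_apply, Fin.sum_univ_two, mul_comm]
  obtain ⟨p, hp⟩ := hne
  refine (ciInf_le ⟨0, forall_mem_range.2 fun θ => Real.sSup_nonneg ?_⟩ z.arg).trans
    (csSup_le ⟨0, p, hp, p, hp, by simp⟩ ?_)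
  · rintro _ ⟨x, -, y, -, rfl⟩
    exact abs_nonneg _
  · rintro _ ⟨x, hx, y, hy, rfl⟩
    have hxy : (x 0 - y 0) * Real.cos z.arg + (x 1 - y 1) * Real.sin z.arg = ⟪u, x⟫ - ⟪u, y⟫ := by
      rw [hcos, hsin, hinner, hinner]; ring
    have hxu := inner_le_supportFun hK hx u
    have hyu := inner_le_supportFun hK hy u
    have hxu' := inner_le_supportFun hK hx (-u)
    have hyu' := inner_le_supportFun hK hy (-u)
    rw [inner_neg_left] at hxu' hyu'
    rw [hxy, abs_le]
    constructor <;> linarith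

theorem isBounded_setOf_isBounded_connectedComponentIn_compl {E : Type*}
    [NormedAddCommGroup E] [NormedSpace ℝ E] {D : Set E} (hD : IsBounded D) :
    IsBounded {x | IsBounded (connectedComponentIn Dᶜ x)} := by
  obtain ⟨R, hR⟩ := hD.subset_closedBall 0
  refine (isBounded_closedBall (x := (0 : E)) (r := max R 0)).subset fun x hx => ?_
  by_contra hxR
  have hRx : max R 0 < ‖x‖ := by simpa using hxR
  set ray : Set E := (· • x) '' Ici (1 : ℝ)
  have hray : ray ⊆ connectedComponentIn Dᶜ x := by
    refine (isPreconnected_Ici.image _ (by fun_prop : Continuous fun t : ℝ => t • x).continuousOn)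
      |>.subset_connectedComponentIn ⟨1, mem_Ici.2 le_rfl, one_smul ℝ x⟩ ?_
    rintro _ ⟨t, ht, rfl⟩ hD'
    have := mem_closedBall_zero_iff.1 (hR hD')
    rw [norm_smul, Real.norm_of_nonneg (zero_le_one.trans ht)] at this
    nlinarith [le_max_left R 0, le_max_right R 0, mem_Ici.1 ht]
  obtain ⟨C, hC⟩ := isBounded_iff_forall_norm_le.1 ((hx : IsBounded _).subset hray)
  have hx0 : 0 < ‖x‖ := (le_max_right R 0).trans_lt hRx
  set t := 1 + |C| / ‖x‖
  have ht : (1 : ℝ) ≤ t := le_add_of_nonneg_right (by positivity)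
  have := hC (t • x) ⟨t, ht, rfl⟩
  rw [norm_smul, Real.norm_of_nonneg (by positivity), add_mul, div_mul_cancel₀ _ hx0.ne'] at this
  linarith [le_abs_self C]

theorem isClosed_setOf_isBounded_connectedComponentIn_compl {X : Type*} [PseudoMetricSpace X]
    [LocallyConnectedSpace X] {D : Set X} (hD : IsClosed D) :
    IsClosed {x | IsBounded (connectedComponentIn Dᶜ x)} := by
  refine isOpen_compl_iff.1 (isOpen_iff_forall_mem_open.2 fun x hx => ?_)
  have hxD : x ∈ Dᶜ := fun h => hx (by simp [connectedComponentIn_eq_empty (notMem_compl_iff.2 h)])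
  refine ⟨connectedComponentIn Dᶜ x, fun y hy => ?_, hD.isOpen_compl.connectedComponentIn,
    mem_connectedComponentIn hxD⟩
  show ¬ IsBounded (connectedComponentIn Dᶜ y)
  rwa [← connectedComponentIn_eq hy]

theorem subset_setOf_isBounded_connectedComponentIn_compl {X : Type*} [PseudoMetricSpace X]
    (D : Set X) : D ⊆ {x | IsBounded (connectedComponentIn Dᶜ x)} := fun x hx => by
  simp [connectedComponentIn_eq_empty (notMem_compl_iff.2 hx)]

namespace PlanePolygon

theorem isCompact_boundary (P : PlanePolygon) : IsCompact P.boundary := by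
  have : NeZero P.n := ⟨by have := P.three_le; omega⟩
  exact isCompact_iUnion fun i => by
    rw [segment_eq_image]; exact isCompact_Icc.image (by fun_prop)

theorem isBounded_carrier (P : PlanePolygon) : IsBounded P.carrier :=
  isBounded_setOf_isBounded_connectedComponentIn_compl P.isCompact_boundary.isBounded

theorem isClosed_carrier (P : PlanePolygon) : IsClosed P.carrier :=
  isClosed_setOf_isBounded_connectedComponentIn_compl P.isCompact_boundary.isClosed

theorem carrier_nonempty (P : PlanePolygon) : P.carrier.Nonempty :=
  ⟨P.vertex 0, subset_setOf_isBounded_connectedComponentIn_compl _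
    (mem_iUnion.2 ⟨0, left_mem_segment ℝ _ _⟩)⟩

end PlanePolygon

/-- **Lemma (balls in convex polygons).** Every convex polygon `P ⊆ ℝ²` contains a ball of
radius `¼ min_{R ∈ SO(2)} |P|_{Π,R}`. -/
theorem convex_polygon_contains_ball (P : PlanePolygon) (hP : Convex ℝ P.carrier) :
    ∃ x : Pt, ball x ((1/4) * minWidth P.carrier) ⊆ P.carrier := by
  rcases le_or_gt (minWidth P.carrier) 0 with hw | hw
  · exact ⟨0, by rw [ball_eq_empty.2 (by linarith)]; exact empty_subset _⟩
  refine exists_ball_subset_of_mul_lt_supportWidth hP P.isClosed_carrier P.isBounded_carrier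
    P.carrier_nonempty (by positivity) fun u hu => ?_
  have := minWidth_le_supportWidth P.carrier_nonempty P.isBounded_carrier hu
  rw [finrank_euclideanSpace_fin]
  push_cast
  linarith
end
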